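/- Let T > 0 and let A_j, β : [0,T] × U → M_N(ℝ) (j = 1, …, n) be jointly smooth satisfying ∂_t A_j = Σ_{i=1}^{n} ( ∂_i F_{ij}(A) + [A_i, F_{ij}(A)] ) + ∂_j β + [A_j, β] on [0,T] × U for all j, where F_{ij}(A) = ∂_i A_j − ∂_j A_i + [A_i, A_j]. Then the constraint equation holds automatically: for every (t,x) ∈ [0,T] × U, Σ_{j=1}^{n} ( ∂_j ( ∂_t A_j − ∂_j β − [A_j, β] ) + [A_j, ∂_t A_j − ∂_j β − [A_j, β]] ) = 0; that is, d_{A(t)}^*( Ȧ(t) − d_{A(t)} β(t) ) = 0. -/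

import Mathlib

open Matrix Set

attribute [local instance] Matrix.normedAddCommGroup Matrix.normedSpace

/-- Partial derivative in the `i`-th coordinate direction of a matrix-valued map. -/
noncomputable def pd {n N : ℕ} (i : Fin n)
    (f : (Fin n → ℝ) → Matrix (Fin N) (Fin N) ℝ) (x : Fin n → ℝ) :
    Matrix (Fin N) (Fin N) ℝ :=
  fderiv ℝ f x (Pi.single i 1)

/-- Matrix commutator `[X, Y] = XY - YX`. -/
def mbracket {N : ℕ} (X Y : Matrix (Fin N) (Fin N) ℝ) : Matrix (Fin N) (Fin N) ℝ :=
  X * Y - Y * X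

/-- Gauge action `g(A)_i = g A_i g⁻¹ - (∂_i g) g⁻¹`. -/
noncomputable def gaugeAct {n N : ℕ} (g : (Fin n → ℝ) → Matrix (Fin N) (Fin N) ℝ)
    (A : Fin n → (Fin n → ℝ) → Matrix (Fin N) (Fin N) ℝ)
    (i : Fin n) (x : Fin n → ℝ) : Matrix (Fin N) (Fin N) ℝ :=
  g x * A i x * (g x)⁻¹ - pd i g x * (g x)⁻¹

/-- Curvature `F_{ij}(A) = ∂_i A_j - ∂_j A_i + [A_i, A_j]`. -/
noncomputable def curv {n N : ℕ} (A : Fin n → (Fin n → ℝ) → Matrix (Fin N) (Fin N) ℝ)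
    (i j : Fin n) (x : Fin n → ℝ) : Matrix (Fin N) (Fin N) ℝ :=
  pd i (A j) x - pd j (A i) x + mbracket (A i x) (A j x)

/-- Coupled divergence of the curvature: `(d_A^* F_A)_j = Σ_i (∂_i F_{ij} + [A_i, F_{ij}])`
(up to sign conventions). -/
noncomputable def divCurv {n N : ℕ} (A : Fin n → (Fin n → ℝ) → Matrix (Fin N) (Fin N) ℝ)
    (j : Fin n) (x : Fin n → ℝ) : Matrix (Fin N) (Fin N) ℝ :=
  ∑ i, (pd i (curv A i j) x + mbracket (A i x) (curv A i j x))


section aux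
variable {n N : ℕ}

noncomputable def mulCLM (N : ℕ) : Matrix (Fin N) (Fin N) ℝ →L[ℝ] Matrix (Fin N) (Fin N) ℝ →L[ℝ] Matrix (Fin N) (Fin N) ℝ :=
  LinearMap.toContinuousLinearMap
    { toFun := fun X => LinearMap.toContinuousLinearMap (LinearMap.mul ℝ _ X)
      map_add' := fun X Y => by ext Z; simp [mul_add, add_mul]
      map_smul' := fun c X => by ext Z; simp }

@[simp] lemma mulCLM_apply (X Y : Matrix (Fin N) (Fin N) ℝ) : mulCLM N X Y = X * Y := by
  simp [mulCLM]

lemma contDiffAt_mul {f g : (Fin n → ℝ) → Matrix (Fin N) (Fin N) ℝ} {x}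
    (hf : ContDiffAt ℝ (⊤ : ℕ∞) f x) (hg : ContDiffAt ℝ (⊤ : ℕ∞) g x) :
    ContDiffAt ℝ (⊤ : ℕ∞) (fun y => f y * g y) x := by
  have h := ((mulCLM N).isBoundedBilinearMap.contDiff (n := (⊤ : ℕ∞))).comp_contDiffAt x (hf.prodMk hg)
  exact h

lemma pd_mul {f g : (Fin n → ℝ) → Matrix (Fin N) (Fin N) ℝ} {x} (i : Fin n)
    (hf : DifferentiableAt ℝ f x) (hg : DifferentiableAt ℝ g x) :
    pd i (fun y => f y * g y) x = pd i f x * g x + f x * pd i g x := by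
  have h : HasFDerivAt (fun y => f y * g y)
      (((mulCLM N).isBoundedBilinearMap.deriv (f x, g x)).comp
        ((fderiv ℝ f x).prod (fderiv ℝ g x))) x := by
    have := ((mulCLM N).isBoundedBilinearMap.hasFDerivAt (f x, g x)).comp x
      (hf.hasFDerivAt.prodMk hg.hasFDerivAt)
    exact this
  unfold pd
  erw [h.fderiv]
  exact add_comm _ _
end aux

section aux2
variable {n N : ℕ} {f g : (Fin n → ℝ) → Matrix (Fin N) (Fin N) ℝ} {x : Fin n → ℝ}

lemma pd_congr {i : Fin n} (h : f =ᶠ[nhds x] g) : pd i f x = pd i g x := by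
  unfold pd; rw [h.fderiv_eq]

lemma pd_add {i : Fin n} (hf : DifferentiableAt ℝ f x) (hg : DifferentiableAt ℝ g x) :
    pd i (fun y => f y + g y) x = pd i f x + pd i g x := by
  unfold pd; erw [fderiv_fun_add hf hg]; rfl

lemma pd_sub {i : Fin n} (hf : DifferentiableAt ℝ f x) (hg : DifferentiableAt ℝ g x) :
    pd i (fun y => f y - g y) x = pd i f x - pd i g x := by
  unfold pd; erw [fderiv_fun_sub hf hg]; rfl

lemma pd_neg {i : Fin n} : pd i (fun y => -(f y)) x = -(pd i f x) := by
  unfold pd; erw [fderiv_fun_neg]; rfl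

lemma pd_sum {ι : Type*} {s : Finset ι} {F : ι → (Fin n → ℝ) → Matrix (Fin N) (Fin N) ℝ}
    {k : Fin n} (h : ∀ i ∈ s, DifferentiableAt ℝ (F i) x) :
    pd k (fun y => ∑ i ∈ s, F i y) x = ∑ i ∈ s, pd k (F i) x := by
  unfold pd; erw [fderiv_fun_sum h]; exact map_sum (ContinuousLinearMap.apply ℝ (Matrix (Fin N) (Fin N) ℝ) (Pi.single k 1)) _ _

lemma differentiableAt_mul (hf : DifferentiableAt ℝ f x) (hg : DifferentiableAt ℝ g x) :
    DifferentiableAt ℝ (fun y => f y * g y) x := by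
  have h := ((mulCLM N).isBoundedBilinearMap.hasFDerivAt (f x, g x)).comp x
    (hf.hasFDerivAt.prodMk hg.hasFDerivAt)
  exact (h : HasFDerivAt (fun y => f y * g y) _ x).differentiableAt

lemma differentiableAt_mbracket (hf : DifferentiableAt ℝ f x) (hg : DifferentiableAt ℝ g x) :
    DifferentiableAt ℝ (fun y => mbracket (f y) (g y)) x := by
  unfold mbracket
  exact (differentiableAt_mul hf hg).sub (differentiableAt_mul hg hf)

lemma contDiffAt_mbracket (hf : ContDiffAt ℝ (⊤ : ℕ∞) f x) (hg : ContDiffAt ℝ (⊤ : ℕ∞) g x) :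
    ContDiffAt ℝ (⊤ : ℕ∞) (fun y => mbracket (f y) (g y)) x := by
  unfold mbracket
  exact (contDiffAt_mul hf hg).sub (contDiffAt_mul hg hf)

lemma pd_mbracket {i : Fin n} (hf : DifferentiableAt ℝ f x) (hg : DifferentiableAt ℝ g x) :
    pd i (fun y => mbracket (f y) (g y)) x
      = mbracket (pd i f x) (g x) + mbracket (f x) (pd i g x) := by
  unfold mbracket
  rw [pd_sub (differentiableAt_mul hf hg) (differentiableAt_mul hg hf),
    pd_mul i hf hg, pd_mul i hg hf]
  abel

lemma contDiffAt_pd {i : Fin n} (hf : ContDiffAt ℝ (⊤ : ℕ∞) f x) : ContDiffAt ℝ (⊤ : ℕ∞) (pd i f) x := by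
  have h := hf.fderiv_right (m := (⊤ : ℕ∞)) (by simp)
  exact h.clm_apply contDiffAt_const

lemma pd_comm {i j : Fin n} (hf : ContDiffAt ℝ (⊤ : ℕ∞) f x) :
    pd i (pd j f) x = pd j (pd i f) x := by
  have hsym := hf.isSymmSndFDerivAt (by rw [minSmoothness_of_isRCLikeNormedField]; exact WithTop.coe_le_coe.mpr le_top)
  have hdiff : DifferentiableAt ℝ (fderiv ℝ f) x :=
    (hf.fderiv_right (m := (⊤ : ℕ∞)) (by simp)).differentiableAt (by simp)
  have key : ∀ a b : Fin n, pd a (pd b f) x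
      = fderiv ℝ (fderiv ℝ f) x (Pi.single a 1) (Pi.single b 1) := by
    intro a b
    unfold pd
    erw [fderiv_clm_apply hdiff (differentiableAt_const _)]
    simp
    show fderiv ℝ f x 0 + fderiv ℝ (fderiv ℝ f) x (Pi.single a 1) (Pi.single b 1) = _
    rw [map_zero, zero_add]
  rw [key i j, key j i]; exact hsym _ _

end aux2

section main
variable {n N : ℕ}

lemma curv_antisymm (A : Fin n → (Fin n → ℝ) → Matrix (Fin N) (Fin N) ℝ) (i j : Fin n) :
    curv A j i = fun y => -(curv A i j y) := funext fun y => by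
  simp only [curv, mbracket]; abel

lemma mbracket_sum {ι : Type*} (s : Finset ι) (X : Matrix (Fin N) (Fin N) ℝ)
    (f : ι → Matrix (Fin N) (Fin N) ℝ) :
    mbracket X (∑ i ∈ s, f i) = ∑ i ∈ s, mbracket X (f i) := by
  simp [mbracket, Finset.mul_sum, Finset.sum_mul, Finset.sum_sub_distrib]

lemma key (A : Fin n → (Fin n → ℝ) → Matrix (Fin N) (Fin N) ℝ) {U : Set (Fin n → ℝ)}
    (hU : IsOpen U) (hA : ∀ i, ContDiffOn ℝ (⊤ : ℕ∞) (A i) U) {x : Fin n → ℝ} (hx : x ∈ U) :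
    ∑ j, (pd j (divCurv A j) x + mbracket (A j x) (divCurv A j x)) = 0 := by
  have hAat : ∀ i, ∀ y ∈ U, ContDiffAt ℝ (⊤ : ℕ∞) (A i) y :=
    fun i y hy => (hA i).contDiffAt (hU.mem_nhds hy)
  have hFat : ∀ i j, ∀ y ∈ U, ContDiffAt ℝ (⊤ : ℕ∞) (curv A i j) y := by
    intro i j y hy
    have h1 := contDiffAt_pd (i := i) (hAat j y hy)
    have h2 := contDiffAt_pd (i := j) (hAat i y hy)
    have h3 := contDiffAt_mbracket (hAat i y hy) (hAat j y hy)
    exact (h1.sub h2).add h3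
  have dA : ∀ i, DifferentiableAt ℝ (A i) x :=
    fun i => (hAat i x hx).differentiableAt (by simp)
  have dF : ∀ i j, DifferentiableAt ℝ (curv A i j) x :=
    fun i j => (hFat i j x hx).differentiableAt (by simp)
  have dpdF : ∀ i j k, DifferentiableAt ℝ (pd k (curv A i j)) x :=
    fun i j k => (contDiffAt_pd (hFat i j x hx)).differentiableAt (by simp)
  set T : Fin n → Fin n → Matrix (Fin N) (Fin N) ℝ := fun i j =>
    pd j (pd i (curv A i j)) x + mbracket (pd j (A i) x) (curv A i j x)
      + mbracket (A i x) (pd j (curv A i j) x)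
      + mbracket (A j x) (pd i (curv A i j) x)
      + mbracket (A j x) (mbracket (A i x) (curv A i j x)) with hT
  have hstep : ∀ j, pd j (divCurv A j) x
      = ∑ i, (pd j (pd i (curv A i j)) x
          + (mbracket (pd j (A i) x) (curv A i j x)
             + mbracket (A i x) (pd j (curv A i j) x))) := by
    intro j
    unfold divCurv
    rw [pd_sum (fun i _ => (dpdF i j i).fun_add (differentiableAt_mbracket (dA i) (dF i j)))]
    refine Finset.sum_congr rfl fun i _ => ?_
    rw [pd_add (dpdF i j i) (differentiableAt_mbracket (dA i) (dF i j)),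
      pd_mbracket (dA i) (dF i j)]
  have hmb : ∀ j, mbracket (A j x) (divCurv A j x)
      = ∑ i, (mbracket (A j x) (pd i (curv A i j) x)
          + mbracket (A j x) (mbracket (A i x) (curv A i j x))) := by
    intro j
    unfold divCurv
    rw [mbracket_sum]
    refine Finset.sum_congr rfl fun i _ => ?_
    simp [mbracket, mul_add, add_mul]
    abel
  have hS : ∑ j, (pd j (divCurv A j) x + mbracket (A j x) (divCurv A j x))
      = ∑ j, ∑ i, T i j := by
    refine Finset.sum_congr rfl fun j _ => ?_
    rw [hstep j, hmb j, ← Finset.sum_add_distrib]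
    refine Finset.sum_congr rfl fun i _ => ?_
    rw [hT]
    abel
  have hTT : ∀ i j, T i j + T j i = 0 := by
    intro i j
    have e1 : curv A j i = fun y => -(curv A i j y) := curv_antisymm A i j
    have e2 : ∀ k, pd k (curv A j i) = fun y => -(pd k (curv A i j) y) := by
      intro k; funext y; rw [e1, pd_neg]
    have e3 : pd i (pd j (curv A j i)) x = -(pd j (pd i (curv A i j)) x) := by
      rw [e2 j, pd_neg, pd_comm (hFat i j x hx)]
    have e2pt : ∀ k : Fin n, pd k (curv A j i) x = -(pd k (curv A i j) x) := by
      intro k; rw [e2 k]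
    have e1pt : curv A j i x = -(curv A i j x) := by rw [e1]
    simp only [hT]
    simp only [e3, e2pt, e1pt]
    rw [show curv A i j x = pd i (A j) x - pd j (A i) x + mbracket (A i x) (A j x) from rfl]
    simp only [mbracket]
    noncomm_ring
  have hSS : (∑ j, ∑ i, T i j) + (∑ j, ∑ i, T i j) = 0 := by
    nth_rewrite 2 [Finset.sum_comm]
    rw [← Finset.sum_add_distrib]
    simp only [← Finset.sum_add_distrib]
    simp [hTT]
  rw [hS]
  have h2 : (2 : ℝ) • (∑ j, ∑ i, T i j) = 0 := by rw [two_smul]; exact hSS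
  rcases smul_eq_zero.mp h2 with h | h
  · norm_num at h
  · exact h

end main

/-- solutions of the gauged Yang–Mills flow system
`∂_t A_j = Σ_i (∂_i F_{ij} + [A_i, F_{ij}]) + ∂_j β + [A_j, β]` automatically satisfy
the constraint `d_{A(t)}^*(Ȧ(t) - d_{A(t)} β(t)) = 0`. -/
theorem gauged_yang_mills_flow_constraint
    {n N : ℕ} (hn : 0 < n) (hN : 0 < N)
    (U : Set (Fin n → ℝ)) (hU : IsOpen U)
    (T : ℝ) (hT : 0 < T)
    (A : Fin n → ℝ → (Fin n → ℝ) → Matrix (Fin N) (Fin N) ℝ)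
    (β : ℝ → (Fin n → ℝ) → Matrix (Fin N) (Fin N) ℝ)
    (hA : ∀ j, ContDiffOn ℝ (⊤ : ℕ∞) (fun p : ℝ × (Fin n → ℝ) => A j p.1 p.2) (Icc 0 T ×ˢ U))
    (hβ : ContDiffOn ℝ (⊤ : ℕ∞) (fun p : ℝ × (Fin n → ℝ) => β p.1 p.2) (Icc 0 T ×ˢ U))
    (hsys : ∀ t ∈ Icc (0:ℝ) T, ∀ x ∈ U, ∀ j,
      deriv (fun s => A j s x) t
        = divCurv (fun i => A i t) j x + pd j (β t) x + mbracket (A j t x) (β t x)) :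
    ∀ t ∈ Icc (0:ℝ) T, ∀ x ∈ U,
      ∑ j, (pd j (fun y =>
            deriv (fun s => A j s y) t - pd j (β t) y - mbracket (A j t y) (β t y)) x
        + mbracket (A j t x)
            (deriv (fun s => A j s x) t - pd j (β t) x - mbracket (A j t x) (β t x))) = 0 := by
  intro t ht x hx
  have hmk : ContDiff ℝ (⊤ : ℕ∞) (fun y : Fin n → ℝ => ((t, y) : ℝ × (Fin n → ℝ))) :=
    contDiff_const.prodMk contDiff_id
  have hA' : ∀ i, ContDiffOn ℝ (⊤ : ℕ∞) ((fun i => A i t) i) U := fun i =>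
    (hA i).comp hmk.contDiffOn (fun y hy => ⟨ht, hy⟩)
  have hkey := key (fun i => A i t) hU hA' hx
  have heq : ∀ j, (fun y =>
        deriv (fun s => A j s y) t - pd j (β t) y - mbracket (A j t y) (β t y))
      =ᶠ[nhds x] divCurv (fun i => A i t) j := by
    intro j
    filter_upwards [hU.mem_nhds hx] with y hy
    rw [hsys t ht y hy j]
    abel
  calc ∑ j, (pd j (fun y =>
            deriv (fun s => A j s y) t - pd j (β t) y - mbracket (A j t y) (β t y)) x
        + mbracket (A j t x)
            (deriv (fun s => A j s x) t - pd j (β t) x - mbracket (A j t x) (β t x)))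
      = ∑ j, (pd j (divCurv (fun i => A i t) j) x
          + mbracket (A j t x) (divCurv (fun i => A i t) j x)) := by
        refine Finset.sum_congr rfl fun j _ => ?_
        have harg : divCurv (fun i => A i t) j x + pd j (β t) x
              + mbracket (A j t x) (β t x) - pd j (β t) x - mbracket (A j t x) (β t x)
            = divCurv (fun i => A i t) j x := by abel
        rw [pd_congr (heq j), hsys t ht x hx j, harg]
    _ = 0 := hkey
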